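/- arXiv:2307.12305 — 2 statements merged into one kernel-verified Lean document; each statement's English description precedes it below -/
import Mathlib

section
/- The FCFS allocation is a fixed point of M_AP: if every agent a_i reports exactly its FCFS policy B_i (computed from the true edge profile E), then M_AP applied to the report profile (B_1,…,B_n) assigns to each agent a_i exactly the set B_i; that is, M_AP(∪_i B_i) = ∪_i B_i. -/
abbrev Matching (n m : ℕ) := Fin m → Option (Fin n)

def load {n m : ℕ} (μ : Matching n m) (i : Fin n) : ℕ :=
  (Finset.univ.filter fun j => μ j = some i).card

def assignedSet {n m : ℕ} (μ : Matching n m) (i : Fin n) : Finset (Fin m) :=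
  Finset.univ.filter fun j => μ j = some i

def IsBMatching {n m : ℕ} (b : Fin n → ℕ) (E : Fin n → Finset (Fin m))
    (μ : Matching n m) : Prop :=
  (∀ j i, μ j = some i → j ∈ E i) ∧ ∀ i, load μ i ≤ b i

noncomputable def util {n m : ℕ} (q : Fin m → ℝ) (μ : Matching n m) (i : Fin n) : ℝ :=
  ∑ j ∈ assignedSet μ i, q j

noncomputable def welfare {n m : ℕ} (q : Fin m → ℝ) (μ : Matching n m) : ℝ :=
  ∑ i, util q μ i

/-- Task processing order: decreasing value, ties broken by smaller task index. -/
noncomputable def taskOrder {m : ℕ} (q : Fin m → ℝ) : List (Fin m) :=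
  (List.finRange m).mergeSort fun j k => decide (q k < q j ∨ (q j = q k ∧ j ≤ k))

noncomputable def apStep {n m : ℕ} (b : Fin n → ℕ) (E : Fin n → Finset (Fin m))
    (μ : Matching n m) (j : Fin m) : Matching n m :=
  match (List.finRange n).find? (fun i => decide (j ∈ E i ∧ load μ i < b i)) with
  | some i => Function.update μ j (some i)
  | none => μ

/-- The mechanism `M_AP`. -/
noncomputable def MAP {n m : ℕ} (b : Fin n → ℕ) (q : Fin m → ℝ)
    (E : Fin n → Finset (Fin m)) : Matching n m :=
  (taskOrder q).foldl (apStep b E) (fun _ => none)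

/-- The `min k |S|` highest-valued tasks of `S` (ties broken by smaller index). -/
noncomputable def topTasks {m : ℕ} (q : Fin m → ℝ) (S : Finset (Fin m)) (k : ℕ) :
    Finset (Fin m) :=
  (((taskOrder q).filter fun j => decide (j ∈ S)).take k).toFinset

noncomputable def remTasks {n m : ℕ} (b : Fin n → ℕ) (q : Fin m → ℝ)
    (E : Fin n → Finset (Fin m)) : ℕ → Finset (Fin m)
  | 0 => Finset.univ
  | i + 1 =>
    if h : i < n then
      remTasks b q E i \ topTasks q (E ⟨i, h⟩ ∩ remTasks b q E i) (b ⟨i, h⟩)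
    else remTasks b q E i

/-- Agent `i`'s FCFS policy / allocation `B_i`. -/
noncomputable def FCFS {n m : ℕ} (b : Fin n → ℕ) (q : Fin m → ℝ)
    (E : Fin n → Finset (Fin m)) (i : Fin n) : Finset (Fin m) :=
  topTasks q (E i ∩ remTasks b q E i.val) (b i)

lemma mem_taskOrder {m : ℕ} (q : Fin m → ℝ) (j : Fin m) : j ∈ taskOrder q := by
  have := List.mergeSort_perm (List.finRange m)
    (fun j k => decide (q k < q j ∨ (q j = q k ∧ j ≤ k)))
  exact this.mem_iff.mpr (List.mem_finRange j)

lemma taskOrder_nodup {m : ℕ} (q : Fin m → ℝ) : (taskOrder q).Nodup := by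
  have := List.mergeSort_perm (List.finRange m)
    (fun j k => decide (q k < q j ∨ (q j = q k ∧ j ≤ k)))
  exact this.nodup_iff.mpr (List.nodup_finRange m)

lemma topTasks_subset {m : ℕ} (q : Fin m → ℝ) (S : Finset (Fin m)) (k : ℕ) :
    topTasks q S k ⊆ S := by
  intro j hj
  rw [topTasks, List.mem_toFinset] at hj
  have := List.mem_filter.mp (List.mem_of_mem_take hj)
  simpa using this.2

lemma topTasks_card_le {m : ℕ} (q : Fin m → ℝ) (S : Finset (Fin m)) (k : ℕ) :
    (topTasks q S k).card ≤ k :=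
  (List.toFinset_card_le _).trans (by simpa using List.length_take_le _ _)

lemma remTasks_succ_subset {n m : ℕ} (b : Fin n → ℕ) (q : Fin m → ℝ)
    (E : Fin n → Finset (Fin m)) (i : ℕ) :
    remTasks b q E (i + 1) ⊆ remTasks b q E i := by
  rw [remTasks]
  split
  · exact Finset.sdiff_subset
  · exact subset_rfl

lemma remTasks_antitone {n m : ℕ} (b : Fin n → ℕ) (q : Fin m → ℝ)
    (E : Fin n → Finset (Fin m)) {i i' : ℕ} (h : i ≤ i') :
    remTasks b q E i' ⊆ remTasks b q E i := by
  induction i' with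
  | zero => simpa [Nat.le_zero.mp h] using subset_rfl
  | succ k ih =>
    rcases Nat.lt_or_ge i (k + 1) with h' | h'
    · exact (remTasks_succ_subset b q E k).trans (ih (Nat.lt_succ_iff.mp h'))
    · have : i = k + 1 := le_antisymm h h'
      subst this; exact subset_rfl

lemma remTasks_succ {n m : ℕ} (b : Fin n → ℕ) (q : Fin m → ℝ)
    (E : Fin n → Finset (Fin m)) (i : Fin n) :
    remTasks b q E (i.val + 1) = remTasks b q E i.val \ FCFS b q E i := by
  rw [remTasks, dif_pos i.isLt, FCFS, Fin.eta]

lemma FCFS_subset_rem {n m : ℕ} (b : Fin n → ℕ) (q : Fin m → ℝ)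
    (E : Fin n → Finset (Fin m)) (i : Fin n) :
    FCFS b q E i ⊆ remTasks b q E i.val := by
  intro j hj
  exact (Finset.mem_inter.mp (topTasks_subset q _ _ hj)).2

lemma FCFS_card_le {n m : ℕ} (b : Fin n → ℕ) (q : Fin m → ℝ)
    (E : Fin n → Finset (Fin m)) (i : Fin n) :
    (FCFS b q E i).card ≤ b i :=
  topTasks_card_le q _ _

lemma FCFS_disjoint {n m : ℕ} (b : Fin n → ℕ) (q : Fin m → ℝ)
    (E : Fin n → Finset (Fin m)) {i i' : Fin n} (h : i ≠ i') :
    Disjoint (FCFS b q E i) (FCFS b q E i') := by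
  have key : ∀ a a' : Fin n, a.val < a'.val →
      Disjoint (FCFS b q E a) (FCFS b q E a') := by
    intro a a' hlt
    have h1 : FCFS b q E a' ⊆ remTasks b q E (a.val + 1) :=
      (FCFS_subset_rem b q E a').trans (remTasks_antitone b q E hlt)
    rw [remTasks_succ] at h1
    exact Finset.disjoint_sdiff.mono_right h1
  rcases lt_or_gt_of_ne (fun hv => h (Fin.ext hv) : i.val ≠ i'.val) with hlt | hlt
  · exact key i i' hlt
  · exact (key i' i hlt).symm

lemma find?_unique {α : Type*} (p : α → Bool) (a : α) :
    ∀ (L : List α), a ∈ L → p a → (∀ x ∈ L, p x → x = a) → L.find? p = some a := by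
  intro L
  induction L with
  | nil => intro h; simp at h
  | cons x L' ih =>
    intro hmem hpa huniq
    by_cases hx : p x
    · rw [List.find?_cons_of_pos hx, huniq x List.mem_cons_self hx]
    · rw [List.find?_cons_of_neg hx]
      have hax : a ≠ x := fun h => hx (h ▸ hpa)
      have : a ∈ L' := by
        rcases List.mem_cons.mp hmem with h | h
        · exact absurd h hax
        · exact h
      exact ih this hpa (fun y hy => huniq y (List.mem_cons_of_mem _ hy))

lemma foldl_apStep_inv {n m : ℕ} (b : Fin n → ℕ) (B : Fin n → Finset (Fin m))
    (hb : ∀ i, 1 ≤ b i)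
    (hcard : ∀ i, (B i).card ≤ b i)
    (hdisj : ∀ i i', i ≠ i' → Disjoint (B i) (B i')) :
    ∀ (L : List (Fin m)) (S : Finset (Fin m)) (μ : Matching n m),
      L.Nodup → (∀ j ∈ L, j ∉ S) →
      (∀ j i, μ j = some i ↔ (j ∈ S ∧ j ∈ B i)) →
      ∀ j i, (L.foldl (apStep b B) μ) j = some i ↔ (j ∈ S ∨ j ∈ L) ∧ j ∈ B i := by
  intro L
  induction L with
  | nil => intro S μ _ _ hμ j i; simpa using hμ j i
  | cons j₀ L' ih =>
    intro S μ hnd hS hμ j i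
    have hj₀S : j₀ ∉ S := hS j₀ List.mem_cons_self
    have hload : ∀ i', load μ i' = (S ∩ B i').card := by
      intro i'
      unfold load
      congr 1
      ext j'
      simp [hμ j' i', Finset.mem_inter]
    have step : ∀ S' : Finset (Fin m), S' = insert j₀ S →
        (∀ j' i', (apStep b B μ j₀) j' = some i' ↔ (j' ∈ S' ∧ j' ∈ B i')) →
        ((j₀ :: L').foldl (apStep b B) μ j = some i ↔ (j ∈ S ∨ j ∈ j₀ :: L') ∧ j ∈ B i) := by
      intro S' hS' hinv
      have hres := ih S' (apStep b B μ j₀) hnd.of_cons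
        (by
          intro j' hj'
          rw [hS']
          simp only [Finset.mem_insert, not_or]
          exact ⟨fun h => (List.nodup_cons.mp hnd).1 (h ▸ hj'),
            hS j' (List.mem_cons_of_mem _ hj')⟩)
        hinv j i
      rw [List.foldl_cons, hres, hS']
      simp only [Finset.mem_insert, List.mem_cons]
      tauto
    by_cases hex : ∃ i₀, j₀ ∈ B i₀
    · obtain ⟨i₀, hi₀⟩ := hex
      have huniq : ∀ x : Fin n, j₀ ∈ B x → x = i₀ := by
        intro x hx
        by_contra hne
        exact (hdisj x i₀ hne).forall_ne_finset hx hi₀ rfl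
      have hlt : load μ i₀ < b i₀ := by
        rw [hload]
        have hss : S ∩ B i₀ ⊂ B i₀ := by
          refine (Finset.ssubset_iff_of_subset Finset.inter_subset_right).mpr
            ⟨j₀, hi₀, fun h => hj₀S (Finset.mem_inter.mp h).1⟩
        exact lt_of_lt_of_le (Finset.card_lt_card hss) (hcard i₀)
      have hfind : (List.finRange n).find?
          (fun i' => decide (j₀ ∈ B i' ∧ load μ i' < b i')) = some i₀ := by
        refine find?_unique _ i₀ _ (List.mem_finRange i₀) (by simp [hi₀, hlt]) ?_
        intro x _ hx
        exact huniq x (by simpa using (of_decide_eq_true hx).1)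
      have hstep : apStep b B μ j₀ = Function.update μ j₀ (some i₀) := by
        rw [apStep, hfind]
      refine step (insert j₀ S) rfl ?_
      intro j' i'
      rw [hstep]
      by_cases hjj : j' = j₀
      · subst hjj
        simp only [Function.update_self, Finset.mem_insert, true_or, true_and]
        constructor
        · rintro h
          have : i₀ = i' := by injection h
          exact this ▸ hi₀
        · intro h
          rw [huniq i' h]
      · rw [Function.update_of_ne hjj, hμ j' i']
        simp [Finset.mem_insert, hjj]
    · push_neg at hex
      have hfind : (List.finRange n).find?
          (fun i' => decide (j₀ ∈ B i' ∧ load μ i' < b i')) = none := by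
        rw [List.find?_eq_none]
        intro x _
        simp [hex x]
      have hstep : apStep b B μ j₀ = μ := by rw [apStep, hfind]
      refine step (insert j₀ S) rfl ?_
      intro j' i'
      rw [hstep, hμ j' i']
      by_cases hjj : j' = j₀
      · subst hjj
        simp [hj₀S, hex i']
      · simp [Finset.mem_insert, hjj]

/-- The FCFS allocation is a fixed point of `M_AP`: if every agent reports exactly its
FCFS policy `B_i` (computed from the true profile `E`), then `M_AP` assigns to each
agent exactly `B_i`. -/
theorem MAP_FCFS_fixed_point (n m : ℕ) (b : Fin n → ℕ) (q : Fin m → ℝ)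
    (hb : ∀ i, 1 ≤ b i) (hq : ∀ j, 0 < q j)
    (E : Fin n → Finset (Fin m)) (i : Fin n) :
    assignedSet (MAP b q (fun k => FCFS b q E k)) i = FCFS b q E i := by
  have key := foldl_apStep_inv b (fun k => FCFS b q E k) hb
    (fun k => FCFS_card_le b q E k)
    (fun k k' h => FCFS_disjoint b q E h)
    (taskOrder q) ∅ (fun _ => none) (taskOrder_nodup q)
    (fun _ _ => Finset.notMem_empty _) (by simp)
  ext j
  simp only [assignedSet, Finset.mem_filter, Finset.mem_univ, true_and]
  rw [MAP, key j i]
  simp [mem_taskOrder q j]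
end

section
/- Every deterministic mechanism has Price of Stability at least 2: for every deterministic mechanism M defined on all MVbM instances and every ε > 0, there exists an instance with true edge profile (T_1,…,T_n) whose set of pure Nash equilibria of M is nonempty and such that every pure Nash equilibrium report profile S satisfies w(μ*) ≥ (2 − ε)·w(M(S)), where μ* is a maximum vertex-weighted b-matching for the true profile. -/
/-- A deterministic mechanism in the Edge Manipulation Setting: for every numbers of
agents and tasks, capacities, task values, and reported edge profile, it returns a
matching. -/
def Mechanism := ∀ (n m : ℕ), (Fin n → ℕ) → (Fin m → ℝ) →
    (Fin n → Finset (Fin m)) → Matching n m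

/-- The mechanism always returns a `b`-matching of the reported edge profile. -/
def Feasible (M : Mechanism) : Prop :=
  ∀ (n m : ℕ) (b : Fin n → ℕ) (q : Fin m → ℝ) (E : Fin n → Finset (Fin m)),
    IsBMatching b E (M n m b q E)

/-- A valid MVbM instance: every capacity is at least `1` and every task value is
positive. -/
def ValidInstance {n m : ℕ} (b : Fin n → ℕ) (q : Fin m → ℝ) : Prop :=
  (∀ i, 1 ≤ b i) ∧ (∀ j, 0 < q j)

/-- Truthfulness: no agent can increase its utility by reporting a nonempty subset of
its true edge set. -/
def Truthful (M : Mechanism) : Prop :=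
  ∀ (n m : ℕ) (b : Fin n → ℕ) (q : Fin m → ℝ), ValidInstance b q →
    ∀ (E : Fin n → Finset (Fin m)) (i : Fin n) (S : Finset (Fin m)),
      S.Nonempty → S ⊆ E i →
      util q (M n m b q (Function.update E i S)) i ≤ util q (M n m b q E) i

/-- `S` is a profile of admissible reports for true edge profile `T`: each report is a
nonempty subset of the agent's true edge set. -/
def ValidReports {n m : ℕ} (T S : Fin n → Finset (Fin m)) : Prop :=
  ∀ i, (S i).Nonempty ∧ S i ⊆ T i

/-- `S` is a pure Nash equilibrium of mechanism `M` when the true edge profile is `T`: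
no agent has an admissible unilateral deviation giving it strictly larger utility. -/
def NashEq (M : Mechanism) {n m : ℕ} (b : Fin n → ℕ) (q : Fin m → ℝ)
    (T S : Fin n → Finset (Fin m)) : Prop :=
  ∀ (i : Fin n) (S' : Finset (Fin m)), S'.Nonempty → S' ⊆ T i →
    util q (M n m b q (Function.update S i S')) i ≤ util q (M n m b q S) i

-- auxiliary lemmas
lemma util2_eq (q : Fin 2 → ℝ) (μ : Matching 2 2) (i : Fin 2) :
    util q μ i = (if μ 0 = some i then q 0 else 0) + (if μ 1 = some i then q 1 else 0) := by
  simp [util, assignedSet, Finset.sum_filter, Fin.sum_univ_two]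

lemma load2_eq (μ : Matching 2 2) (i : Fin 2) :
    load μ i = (if μ 0 = some i then 1 else 0) + (if μ 1 = some i then 1 else 0) := by
  show (Finset.univ.filter fun j => μ j = some i).card = _
  rw [Finset.card_filter, Fin.sum_univ_two]

lemma not_both {μ : Matching 2 2} {i : Fin 2} (h : load μ i ≤ 1) :
    ¬(μ 0 = some i ∧ μ 1 = some i) := by
  rintro ⟨h0, h1⟩
  rw [load2_eq, if_pos h0, if_pos h1] at h
  omega

lemma welfare2_eq (q : Fin 2 → ℝ) (μ : Matching 2 2) :
    welfare q μ = util q μ 0 + util q μ 1 := by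
  simp [welfare, Fin.sum_univ_two]

lemma util_le_one {q : Fin 2 → ℝ} (hq0 : q 0 ≤ 1) (hq1 : q 1 ≤ 1)
    (hq0' : 0 ≤ q 0) (hq1' : 0 ≤ q 1)
    {μ : Matching 2 2} {i : Fin 2} (h : load μ i ≤ 1) : util q μ i ≤ 1 := by
  have hb := not_both h
  rw [util2_eq]
  split_ifs with h0 h1 h1 <;> simp_all <;> linarith

lemma welfare_le_sum {q : Fin 2 → ℝ} (hq0 : 0 ≤ q 0) (hq1 : 0 ≤ q 1)
    (μ : Matching 2 2) : welfare q μ ≤ q 0 + q 1 := by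
  rw [welfare2_eq, util2_eq, util2_eq]
  have h0 : (if μ 0 = some 0 then q 0 else 0) + (if μ 0 = some 1 then q 0 else 0) ≤ q 0 := by
    split_ifs with h h' <;> simp_all
  have h1 : (if μ 1 = some 0 then q 1 else 0) + (if μ 1 = some 1 then q 1 else 0) ≤ q 1 := by
    split_ifs with h h' <;> simp_all
  linarith

lemma fin2_resolve : ∀ a o i : Fin 2, a ≠ o → i ≠ a → i = o := by decide
lemma fin2_pair : ∀ a o : Fin 2, a ≠ o → (a = 0 ∧ o = 1) ∨ (a = 1 ∧ o = 0) := by decide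

lemma grab_case (M : Mechanism) (hF : Feasible M) (ε : ℝ)
    (q : Fin 2 → ℝ) (hq0 : q 0 = 1) (hq1pos : 0 < q 1) (hq1lt : q 1 < 1)
    (hkey : 2 - ε ≤ q 0 + q 1)
    (a o : Fin 2) (hao : a ≠ o)
    (hμ : (M 2 2 (fun _ => 1) q (fun _ => ({0} : Finset (Fin 2)))) 0 = some a) :
    ∃ (T : Fin 2 → Finset (Fin 2)) (μ : Matching 2 2),
      IsBMatching (fun _ => 1) T μ ∧
      (∀ μ' : Matching 2 2, IsBMatching (fun _ => 1) T μ' → welfare q μ' ≤ welfare q μ) ∧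
      (∃ S, ValidReports T S ∧ NashEq M (fun _ => 1) q T S) ∧
      (∀ S, ValidReports T S → NashEq M (fun _ => 1) q T S →
        welfare q μ ≥ (2 - ε) * welfare q (M 2 2 (fun _ => 1) q S)) := by
  set E0 : Fin 2 → Finset (Fin 2) := fun _ => {0} with hE0
  set T : Fin 2 → Finset (Fin 2) := fun i => if i = a then {0, 1} else {0} with hT
  set μstar : Matching 2 2 := fun j => if j = 0 then some o else some a with hμstar
  have hq0' : (0:ℝ) ≤ q 0 := by rw [hq0]; norm_num
  have hq1' : (0:ℝ) ≤ q 1 := hq1pos.le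
  have hTa : T a = {0, 1} := by simp [hT]
  have hTo : T o = {0} := by
    show (if o = a then ({0, 1} : Finset (Fin 2)) else {0}) = {0}
    exact if_neg (fun h => hao h.symm)
  have hμs0 : μstar 0 = some o := by simp [hμstar]
  have hμs1 : μstar 1 = some a := by simp [hμstar]
  -- welfare of μstar
  have hw : welfare q μstar = q 0 + q 1 := by
    rw [welfare2_eq, util2_eq, util2_eq, hμs0, hμs1]
    rcases fin2_pair a o hao with ⟨rfl, rfl⟩ | ⟨rfl, rfl⟩ <;> simp <;> ring
  -- utility of the grabber at E0 is at least 1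
  have hutilE0 : (1:ℝ) ≤ util q (M 2 2 (fun _ => 1) q E0) a := by
    rw [util2_eq, hμ, if_pos rfl, hq0]
    have : (0:ℝ) ≤ if (M 2 2 (fun _ => 1) q E0) 1 = some a then q 1 else 0 := by
      split_ifs <;> linarith
    linarith
  refine ⟨T, μstar, ⟨?_, ?_⟩, ?_, ⟨E0, ?_, ?_⟩, ?_⟩
  · -- edges of μstar
    intro j i hj
    by_cases hj0 : j = 0
    · subst hj0
      rw [hμs0] at hj
      obtain rfl : o = i := Option.some.inj hj
      rw [hTo]; exact Finset.mem_singleton_self 0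
    · obtain rfl : j = 1 := fin2_resolve 0 1 j (by decide) hj0
      rw [hμs1] at hj
      obtain rfl : a = i := Option.some.inj hj
      rw [hTa]; decide
  · -- loads of μstar
    intro i
    rw [load2_eq, hμs0, hμs1]
    have : ¬(o = i ∧ a = i) := by rintro ⟨rfl, h⟩; exact hao h
    split_ifs with h1 h2 h2 <;> simp_all
  · -- optimality of μstar
    intro μ' _
    rw [hw]; exact welfare_le_sum hq0' hq1' μ'
  · -- E0 is a valid report profile
    intro i
    refine ⟨Finset.singleton_nonempty 0, ?_⟩
    have hE0i : E0 i = {0} := rfl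
    by_cases hia : i = a
    · rw [hE0i, hia, hTa, Finset.singleton_subset_iff]; decide
    · have hio : i = o := fin2_resolve a o i hao hia
      rw [hE0i, hio, hTo]
  · -- E0 is a Nash equilibrium
    intro i S' hne hsub
    by_cases hia : i = a
    · rw [hia]
      refine le_trans (util_le_one hq0.le hq1lt.le hq0' hq1' ?_) hutilE0
      exact (hF 2 2 (fun _ => 1) q (Function.update E0 a S')).2 a
    · have hio : i = o := fin2_resolve a o i hao hia
      rw [hio] at hsub ⊢
      rw [hTo] at hsub
      rcases Finset.subset_singleton_iff.mp hsub with rfl | rfl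
      · exact absurd hne (by simp)
      · have h0 : ({0} : Finset (Fin 2)) = E0 o := rfl
        rw [h0, Function.update_eq_self]
  · -- every Nash equilibrium has welfare 1 under M
    intro S hS hNE
    have hSo : S o = {0} := by
      obtain ⟨hne, hsub⟩ := hS o
      rw [hTo] at hsub
      rcases Finset.subset_singleton_iff.mp hsub with h | h
      · exact absurd hne (by simp [h])
      · exact h
    have hupd : Function.update S a ({0} : Finset (Fin 2)) = E0 := by
      funext i
      by_cases hia : i = a
      · rw [hia, Function.update_self]
      · have hio : i = o := fin2_resolve a o i hao hia
        rw [Function.update_of_ne hia, hio, hSo]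
    have hdev := hNE a {0} (Finset.singleton_nonempty 0) (by rw [hTa]; intro x hx; simp_all)
    rw [hupd] at hdev
    set ν : Matching 2 2 := M 2 2 (fun _ => 1) q S with hν
    have hfeas := hF 2 2 (fun _ => 1) q S
    have h1le : (1:ℝ) ≤ util q ν a := le_trans hutilE0 hdev
    have hν0 : ν 0 = some a := by
      by_contra hc
      rw [util2_eq, if_neg hc] at h1le
      have : (if ν 1 = some a then q 1 else 0) < 1 := by split_ifs <;> linarith
      linarith
    have hν1a : ν 1 ≠ some a := fun h => not_both (hfeas.2 a) ⟨hν0, h⟩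
    have hν1o : ν 1 ≠ some o := by
      intro h
      have h1 := hfeas.1 1 o h
      rw [hSo] at h1
      exact absurd h1 (by decide)
    have hν0o : ν 0 ≠ some o := by
      rw [hν0]; intro h; exact hao (Option.some.inj h)
    have hwν : welfare q ν = 1 := by
      rw [welfare2_eq, util2_eq, util2_eq]
      rcases fin2_pair a o hao with ⟨rfl, rfl⟩ | ⟨rfl, rfl⟩ <;>
        simp [hν0, hν1a, hν1o, hν0o, hq0]
    rw [hwν, hw, mul_one]
    exact hkey

lemma none_case (M : Mechanism) (hF : Feasible M) (ε : ℝ)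
    (q : Fin 2 → ℝ) (hq0 : q 0 = 1) (hq1pos : 0 < q 1)
    (hμ : (M 2 2 (fun _ => 1) q (fun _ => ({0} : Finset (Fin 2)))) 0 = none) :
    ∃ (T : Fin 2 → Finset (Fin 2)) (μ : Matching 2 2),
      IsBMatching (fun _ => 1) T μ ∧
      (∀ μ' : Matching 2 2, IsBMatching (fun _ => 1) T μ' → welfare q μ' ≤ welfare q μ) ∧
      (∃ S, ValidReports T S ∧ NashEq M (fun _ => 1) q T S) ∧
      (∀ S, ValidReports T S → NashEq M (fun _ => 1) q T S →
        welfare q μ ≥ (2 - ε) * welfare q (M 2 2 (fun _ => 1) q S)) := by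
  set E0 : Fin 2 → Finset (Fin 2) := fun _ => {0} with hE0
  set μ0 : Matching 2 2 := fun j => if j = 0 then some 0 else none with hμ0def
  have hq0' : (0:ℝ) ≤ q 0 := by rw [hq0]; norm_num
  have hμ00 : μ0 0 = some 0 := by
    show (if (0 : Fin 2) = 0 then some 0 else none) = some 0
    exact if_pos rfl
  have hμ01 : μ0 1 = none := by
    show (if (1 : Fin 2) = 0 then some 0 else none) = none
    exact if_neg (by decide)
  have hwμ : welfare q μ0 = q 0 := by
    rw [welfare2_eq, util2_eq, util2_eq, hμ00, hμ01]
    simp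
  refine ⟨E0, μ0, ⟨?_, ?_⟩, ?_, ⟨E0, ?_, ?_⟩, ?_⟩
  · intro j i hj
    by_cases hj0 : j = 0
    · have hE0i : E0 i = {0} := rfl
      rw [hE0i, hj0]
      exact Finset.mem_singleton_self 0
    · have hj1 : j = 1 := fin2_resolve 0 1 j (by decide) hj0
      rw [hj1, hμ01] at hj
      exact absurd hj (by simp)
  · intro i
    rw [load2_eq, hμ00, hμ01]
    split_ifs <;> simp_all
  · intro μ' hm
    have hμ'1 : μ' 1 = none := by
      cases h : μ' 1 with
      | none => rfl
      | some i =>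
        have hx : (1 : Fin 2) ∈ ({0} : Finset (Fin 2)) := hm.1 1 i h
        exact absurd hx (by decide)
    rw [hwμ, welfare2_eq, util2_eq, util2_eq, hμ'1]
    simp only [reduceCtorEq, if_false]
    split_ifs with h h' h' <;> simp_all <;> linarith
  · intro i
    exact ⟨Finset.singleton_nonempty 0, Finset.Subset.refl _⟩
  · intro i S' hne hsub
    have hTi : E0 i = {0} := rfl
    rw [hTi] at hsub
    rcases Finset.subset_singleton_iff.mp hsub with rfl | rfl
    · exact absurd hne (by simp)
    · have h0 : ({0} : Finset (Fin 2)) = E0 i := rfl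
      rw [h0, Function.update_eq_self]
  · intro S hS hNE
    have hSE : S = E0 := by
      funext i
      obtain ⟨hne, hsub⟩ := hS i
      have hTi : E0 i = {0} := rfl
      rw [hTi] at hsub
      rcases Finset.subset_singleton_iff.mp hsub with h | h
      · exact absurd hne (by simp [h])
      · exact h.trans hTi.symm
    rw [hSE]
    have hν1 : (M 2 2 (fun _ => 1) q E0) 1 = none := by
      cases h : (M 2 2 (fun _ => 1) q E0) 1 with
      | none => rfl
      | some i =>
        have hx : (1 : Fin 2) ∈ ({0} : Finset (Fin 2)) := (hF 2 2 (fun _ => 1) q E0).1 1 i h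
        exact absurd hx (by decide)
    have hw0 : welfare q (M 2 2 (fun _ => 1) q E0) = 0 := by
      rw [welfare2_eq, util2_eq, util2_eq, hμ, hν1]
      simp
    rw [hw0, hwμ, mul_zero, hq0]
    norm_num


/-- Every deterministic mechanism has Price of Stability at least `2`: for every
`ε > 0` there is an instance whose set of pure Nash equilibria is nonempty and such
that every pure Nash equilibrium has welfare under `M` at most `1/(2 - ε)` times the
maximum welfare of the true profile. -/
theorem PoS_at_least_two (M : Mechanism) (hF : Feasible M) (ε : ℝ) (hε : 0 < ε) :
    ∃ (n m : ℕ) (b : Fin n → ℕ) (q : Fin m → ℝ)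
      (T : Fin n → Finset (Fin m)) (μ : Matching n m),
      ValidInstance b q ∧ IsBMatching b T μ ∧
      (∀ μ' : Matching n m, IsBMatching b T μ' → welfare q μ' ≤ welfare q μ) ∧
      (∃ S : Fin n → Finset (Fin m), ValidReports T S ∧ NashEq M b q T S) ∧
      (∀ S : Fin n → Finset (Fin m), ValidReports T S → NashEq M b q T S →
        welfare q μ ≥ (2 - ε) * welfare q (M n m b q S)) := by
  
  set δ : ℝ := min ε 1 / 2 with hδ
  have hmin : 0 < min ε 1 := lt_min hε one_pos
  have hδ0 : 0 < δ := by rw [hδ]; linarith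
  have hδ1 : δ < 1 := by have := min_le_right ε 1; rw [hδ]; linarith
  have hδε : δ ≤ ε := by have := min_le_left ε 1; rw [hδ]; linarith
  set q : Fin 2 → ℝ := fun j => if j = 0 then 1 else 1 - δ with hqdef
  have hq0 : q 0 = 1 := by
    show (if (0 : Fin 2) = 0 then (1:ℝ) else 1 - δ) = 1
    exact if_pos rfl
  have hq1 : q 1 = 1 - δ := by
    show (if (1 : Fin 2) = 0 then (1:ℝ) else 1 - δ) = 1 - δ
    exact if_neg (by decide)
  have hq1pos : 0 < q 1 := by rw [hq1]; linarith
  have hq1lt : q 1 < 1 := by rw [hq1]; linarith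
  have hkey : 2 - ε ≤ q 0 + q 1 := by rw [hq0, hq1]; linarith
  have hVI : ValidInstance (fun _ : Fin 2 => 1) q := by
    refine ⟨fun _ => le_refl 1, fun j => ?_⟩
    by_cases hj : j = 0
    · rw [hj, hq0]; norm_num
    · have hj1 : j = 1 := fin2_resolve 0 1 j (by decide) hj
      rw [hj1]; exact hq1pos
  rcases hcase : (M 2 2 (fun _ => 1) q (fun _ => ({0} : Finset (Fin 2)))) 0 with _ | a
  · obtain ⟨T, μ, h1, h2, h3, h4⟩ := none_case M hF ε q hq0 hq1pos hcase
    exact ⟨2, 2, fun _ => 1, q, T, μ, hVI, h1, h2, h3, h4⟩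
  · have hao : a ≠ (if a = 0 then 1 else 0) := by
      by_cases h : a = 0 <;> simp [h]
    obtain ⟨T, μ, h1, h2, h3, h4⟩ := grab_case M hF ε q hq0 hq1pos hq1lt hkey a _ hao hcase
    exact ⟨2, 2, fun _ => 1, q, T, μ, hVI, h1, h2, h3, h4⟩
end
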